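/- Let C₁, C₂ ∈ V := {C ∈ Mat(2n×2n,ℝ) : C·J + J·C = 0}. Then the linear map C ↦ C₂·C₁·C + C·C₁·C₂ − C₁·C·C₂ − C₂·C·C₁ preserves V, and its trace as an endomorphism of V, plus the trace of the linear endomorphism of Mat(k×2n,ℝ) × Mat(2n×k,ℝ) given by (B, B') ↦ (B·C₁·C₂, C₂·C₁·B'), equals 2(k+n)·Tr(C₂·C₁). (This is the trace identity showing that for sl(k+2n,ℝ) the pseudo-Kähler metric g⁺ satisfies the Einstein condition Ric = (k+n)·g⁺ on the vertical directions.) -/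

import Mathlib

open Matrix

/-- The standard complex structure matrix `J = [[0, -Id_n],[Id_n, 0]]`. -/
noncomputable def Jmat (n : ℕ) : Matrix (Fin n ⊕ Fin n) (Fin n ⊕ Fin n) ℝ :=
  Matrix.fromBlocks 0 (-1) 1 0

/-- The subspace `V = {C : C·J + J·C = 0}` of `2n×2n` real matrices. -/
noncomputable def Vsub (n : ℕ) : Submodule ℝ (Matrix (Fin n ⊕ Fin n) (Fin n ⊕ Fin n) ℝ) where
  carrier := {C | C * Jmat n + Jmat n * C = 0}
  add_mem' := by
    intro a b ha hb
    simp only [Set.mem_setOf_eq] at *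
    rw [add_mul, mul_add]
    calc a * Jmat n + b * Jmat n + (Jmat n * a + Jmat n * b)
        = (a * Jmat n + Jmat n * a) + (b * Jmat n + Jmat n * b) := by abel
      _ = 0 := by rw [ha, hb]; simp
  zero_mem' := by simp
  smul_mem' := by
    intro c x hx
    simp only [Set.mem_setOf_eq] at *
    rw [Matrix.smul_mul, Matrix.mul_smul, ← smul_add, hx, smul_zero]

/-- Right multiplication by a fixed matrix, as a linear map on rectangular matrices. -/
noncomputable def rmulMap {m p : Type*} [Fintype p]
    (D : Matrix p p ℝ) : Matrix m p ℝ →ₗ[ℝ] Matrix m p ℝ where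
  toFun B := B * D
  map_add' a b := by simp [Matrix.add_mul]
  map_smul' c a := by simp [Matrix.smul_mul]

/-- Left multiplication by a fixed matrix, as a linear map on rectangular matrices. -/
noncomputable def lmulMap {m p : Type*} [Fintype p]
    (D : Matrix p p ℝ) : Matrix p m ℝ →ₗ[ℝ] Matrix p m ℝ where
  toFun B := D * B
  map_add' a b := by simp [Matrix.mul_add]
  map_smul' c a := by simp [Matrix.mul_smul]

/-- The linear map `C ↦ C₂·C₁·C + C·C₁·C₂ − C₁·C·C₂ − C₂·C·C₁`. -/
noncomputable def ricciVertMap (n : ℕ)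
    (C₁ C₂ : Matrix (Fin n ⊕ Fin n) (Fin n ⊕ Fin n) ℝ) :
    Matrix (Fin n ⊕ Fin n) (Fin n ⊕ Fin n) ℝ →ₗ[ℝ] Matrix (Fin n ⊕ Fin n) (Fin n ⊕ Fin n) ℝ :=
  LinearMap.mulLeft ℝ (C₂ * C₁) + LinearMap.mulRight ℝ (C₁ * C₂)
    - (LinearMap.mulLeft ℝ C₁).comp (LinearMap.mulRight ℝ C₂)
    - (LinearMap.mulLeft ℝ C₂).comp (LinearMap.mulRight ℝ C₁)

/-! ### Auxiliary material -/

/-- The two-sided multiplication map `C ↦ A·C·B`. -/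
noncomputable def LRmap {m p : Type*} [Fintype m] [Fintype p]
    (A : Matrix m m ℝ) (B : Matrix p p ℝ) : Matrix m p ℝ →ₗ[ℝ] Matrix m p ℝ where
  toFun C := A * C * B
  map_add' a b := by simp [Matrix.mul_add, Matrix.add_mul]
  map_smul' c a := by simp [Matrix.mul_smul, Matrix.smul_mul]

@[simp] lemma LRmap_apply {m p : Type*} [Fintype m] [Fintype p]
    (A : Matrix m m ℝ) (B : Matrix p p ℝ) (C : Matrix m p ℝ) :
    LRmap A B C = A * C * B := rfl

lemma trace_LRmap {m p : Type*} [Fintype m] [Fintype p] [DecidableEq m] [DecidableEq p]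
    (A : Matrix m m ℝ) (B : Matrix p p ℝ) :
    LinearMap.trace ℝ (Matrix m p ℝ) (LRmap A B) = A.trace * B.trace := by
  rw [LinearMap.trace_eq_matrix_trace ℝ (Matrix.stdBasis ℝ m p)]
  have hrepr : ∀ (M : Matrix m p ℝ) (i : m) (j : p),
      (Matrix.stdBasis ℝ m p).repr M (i, j) = M i j := by
    intro M i j; simp [Matrix.stdBasis, Pi.basis_repr]
  have hentry : ∀ (i : m) (j : p),
      (A * Matrix.single i j (1:ℝ) * B) i j = A i i * B j j := by
    intro i j
    simp [Matrix.mul_apply, Matrix.single, Finset.sum_ite_eq, ite_and,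
      Finset.mul_sum, Finset.sum_mul]
  rw [Matrix.trace]
  rw [show (Finset.univ : Finset (m × p)) = Finset.univ ×ˢ Finset.univ from rfl]
  rw [Finset.sum_product]
  have hdiag : ∀ i j, (LinearMap.toMatrix (Matrix.stdBasis ℝ m p) (Matrix.stdBasis ℝ m p)
      (LRmap A B)).diag (i, j) = A i i * B j j := by
    intro i j
    rw [Matrix.diag_apply, LinearMap.toMatrix_apply, Matrix.stdBasis_eq_single]
    rw [hrepr]
    exact hentry i j
  simp_rw [hdiag]
  rw [Matrix.trace, Matrix.trace, Finset.sum_mul_sum]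
  simp [Matrix.diag]

lemma anticomm_mul_comm {R : Type*} [Ring R] {J x y : R}
    (hx : x * J = -(J * x)) (hy : y * J = -(J * y)) : (x * y) * J = J * (x * y) := by
  calc (x * y) * J = x * (y * J) := mul_assoc _ _ _
    _ = -(x * J * y) := by rw [hy, mul_neg, mul_assoc]
    _ = J * (x * y) := by rw [hx, neg_mul, neg_neg, mul_assoc]

lemma comm_mul_anticomm {R : Type*} [Ring R] {J u x : R}
    (hu : u * J = J * u) (hx : x * J = -(J * x)) : (u * x) * J = -(J * (u * x)) := by
  calc (u * x) * J = u * (x * J) := mul_assoc _ _ _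
    _ = -(u * J * x) := by rw [hx, mul_neg, mul_assoc]
    _ = -(J * (u * x)) := by rw [hu, mul_assoc]

lemma anticomm_mul_comm' {R : Type*} [Ring R] {J x u : R}
    (hx : x * J = -(J * x)) (hu : u * J = J * u) : (x * u) * J = -(J * (x * u)) := by
  calc (x * u) * J = x * (u * J) := mul_assoc _ _ _
    _ = x * J * u := by rw [hu, mul_assoc]
    _ = -(J * (x * u)) := by rw [hx, neg_mul, mul_assoc]

lemma ricci_preserves {R : Type*} [Ring R] {J C₁ C₂ C : R}
    (h1 : C₁ * J + J * C₁ = 0) (h2 : C₂ * J + J * C₂ = 0) (h : C * J + J * C = 0) :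
    (C₂ * C₁ * C + C * (C₁ * C₂) - C₁ * (C * C₂) - C₂ * (C * C₁)) * J
      + J * (C₂ * C₁ * C + C * (C₁ * C₂) - C₁ * (C * C₂) - C₂ * (C * C₁)) = 0 := by
  have h1' : C₁ * J = -(J * C₁) := eq_neg_of_add_eq_zero_left h1
  have h2' : C₂ * J = -(J * C₂) := eq_neg_of_add_eq_zero_left h2
  have h' : C * J = -(J * C) := eq_neg_of_add_eq_zero_left h
  have t1 : (C₂ * C₁ * C) * J = -(J * (C₂ * C₁ * C)) :=
    comm_mul_anticomm (anticomm_mul_comm h2' h1') h'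
  have t2 : (C * (C₁ * C₂)) * J = -(J * (C * (C₁ * C₂))) :=
    anticomm_mul_comm' h' (anticomm_mul_comm h1' h2')
  have t3 : (C₁ * (C * C₂)) * J = -(J * (C₁ * (C * C₂))) :=
    anticomm_mul_comm' h1' (anticomm_mul_comm h' h2')
  have t4 : (C₂ * (C * C₁)) * J = -(J * (C₂ * (C * C₁))) :=
    anticomm_mul_comm' h2' (anticomm_mul_comm h' h1')
  rw [sub_mul, sub_mul, add_mul, mul_sub, mul_sub, mul_add, t1, t2, t3, t4]
  abel

lemma mem_Vsub_iff {n : ℕ} {C : Matrix (Fin n ⊕ Fin n) (Fin n ⊕ Fin n) ℝ} :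
    C ∈ Vsub n ↔ C * Jmat n + Jmat n * C = 0 := Iff.rfl

lemma Jmat_sq (n : ℕ) : Jmat n * Jmat n = -1 := by
  have h1 : (-1 : Matrix (Fin n ⊕ Fin n) (Fin n ⊕ Fin n) ℝ)
      = Matrix.fromBlocks (-1) 0 0 (-1) := by
    rw [← Matrix.fromBlocks_one (l := Fin n) (m := Fin n) (α := ℝ), Matrix.fromBlocks_neg]
    simp
  rw [Jmat, Matrix.fromBlocks_multiply, h1]
  congr 1 <;> simp

lemma ricciVertMap_apply (n : ℕ) (C₁ C₂ C : Matrix (Fin n ⊕ Fin n) (Fin n ⊕ Fin n) ℝ) :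
    ricciVertMap n C₁ C₂ C
      = C₂ * C₁ * C + C * (C₁ * C₂) - C₁ * (C * C₂) - C₂ * (C * C₁) := by
  simp only [ricciVertMap, LinearMap.sub_apply, LinearMap.add_apply, LinearMap.comp_apply,
    LinearMap.mulLeft_apply, LinearMap.mulRight_apply]

lemma pv_mem_aux {R : Type*} [Ring R] (J C : R) (hJ : J * J = -1) :
    (C + J * C * J) * J + J * (C + J * C * J) = 0 := by
  rw [add_mul, mul_add]
  have e1 : (J * C * J) * J = -(J * C) := by rw [mul_assoc (J * C) J J, hJ, mul_neg_one]
  have e2 : J * (J * C * J) = -(C * J) := by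
    rw [← mul_assoc, ← mul_assoc, hJ, neg_one_mul, neg_mul]
  rw [e1, e2]; abel

lemma pv_fix_aux {R : Type*} [Ring R] {J C : R} (hJ : J * J = -1)
    (h : C * J + J * C = 0) : J * C * J = C := by
  have h' : C * J = -(J * C) := eq_neg_of_add_eq_zero_left h
  calc J * C * J = J * (C * J) := mul_assoc _ _ _
    _ = -(J * (J * C)) := by rw [h', mul_neg]
    _ = C := by rw [← mul_assoc, hJ, neg_one_mul, neg_neg]

lemma trace_anti_zero {p : Type*} [Fintype p] [DecidableEq p]
    {J C : Matrix p p ℝ} (hJ : J * J = -1) (h : C * J + J * C = 0) :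
    C.trace = 0 := by
  have h' : C * J = -(J * C) := eq_neg_of_add_eq_zero_left h
  have way1 : ((C * J) * J).trace = -C.trace := by
    rw [mul_assoc, hJ, Matrix.mul_neg, Matrix.mul_one, Matrix.trace_neg]
  have way2 : ((C * J) * J).trace = -((C * J) * J).trace := by
    nth_rewrite 1 [h']
    rw [Matrix.neg_mul, Matrix.trace_neg, mul_assoc J C J, Matrix.trace_mul_comm J (C * J)]
  linarith

lemma trace_mul_J_zero {p : Type*} [Fintype p] [DecidableEq p]
    {J C : Matrix p p ℝ} (h : C * J + J * C = 0) :
    (C * J).trace = 0 := by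
  have h' : C * J = -(J * C) := eq_neg_of_add_eq_zero_left h
  have e : (C * J).trace = -(C * J).trace := by
    nth_rewrite 2 [h']
    rw [Matrix.trace_neg, neg_neg, Matrix.trace_mul_comm]
  linarith

lemma trace_J_zero (n : ℕ) : (Jmat n).trace = 0 := by
  simp [Jmat, Matrix.trace, Matrix.diag, Fintype.sum_sum_type]

theorem einstein_trace_identity_sl (k n : ℕ) (hk : 0 < k) (hn : 0 < n)
    (C₁ C₂ : Matrix (Fin n ⊕ Fin n) (Fin n ⊕ Fin n) ℝ)
    (hC₁ : C₁ ∈ Vsub n) (hC₂ : C₂ ∈ Vsub n) :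
    ∃ h : ∀ C ∈ Vsub n, ricciVertMap n C₁ C₂ C ∈ Vsub n,
      LinearMap.trace ℝ ↥(Vsub n) ((ricciVertMap n C₁ C₂).restrict h) +
        LinearMap.trace ℝ
          (Matrix (Fin k) (Fin n ⊕ Fin n) ℝ × Matrix (Fin n ⊕ Fin n) (Fin k) ℝ)
          (LinearMap.prodMap (rmulMap (C₁ * C₂)) (lmulMap (C₂ * C₁))) =
      2 * ((k : ℝ) + n) * Matrix.trace (C₂ * C₁) := by
  have hJ2 : Jmat n * Jmat n = -1 := Jmat_sq n
  rw [mem_Vsub_iff] at hC₁ hC₂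
  have hpres : ∀ C ∈ Vsub n, ricciVertMap n C₁ C₂ C ∈ Vsub n := by
    intro C hC
    rw [mem_Vsub_iff] at hC ⊢
    rw [ricciVertMap_apply]
    exact ricci_preserves hC₁ hC₂ hC
  refine ⟨hpres, ?_⟩
  let Pv : Matrix (Fin n ⊕ Fin n) (Fin n ⊕ Fin n) ℝ →ₗ[ℝ]
      Matrix (Fin n ⊕ Fin n) (Fin n ⊕ Fin n) ℝ :=
    (2⁻¹ : ℝ) • (LinearMap.id + LRmap (Jmat n) (Jmat n))
  have hPv_apply : ∀ C, Pv C = (2⁻¹ : ℝ) • (C + Jmat n * C * Jmat n) := by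
    intro C
    simp only [Pv, LinearMap.smul_apply, LinearMap.add_apply, LinearMap.id_apply, LRmap_apply]
  have hPv_mem : ∀ C, Pv C ∈ Vsub n := by
    intro C
    rw [hPv_apply]
    exact Submodule.smul_mem _ _ (mem_Vsub_iff.mpr (pv_mem_aux (Jmat n) C hJ2))
  have hPv_fix : ∀ C, C ∈ Vsub n → Pv C = C := by
    intro C hC
    rw [hPv_apply, pv_fix_aux hJ2 (mem_Vsub_iff.mp hC)]
    module
  let pr : Matrix (Fin n ⊕ Fin n) (Fin n ⊕ Fin n) ℝ →ₗ[ℝ] ↥(Vsub n) :=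
    LinearMap.codRestrict (Vsub n) Pv hPv_mem
  have key : LinearMap.trace ℝ (↥(Vsub n)) ((ricciVertMap n C₁ C₂).restrict hpres)
      = LinearMap.trace ℝ _ (ricciVertMap n C₁ C₂ ∘ₗ Pv) := by
    have comp_eq : ricciVertMap n C₁ C₂ ∘ₗ Pv
        = ((Vsub n).subtype ∘ₗ (ricciVertMap n C₁ C₂).restrict hpres) ∘ₗ pr :=
      LinearMap.ext fun C => rfl
    rw [comp_eq, LinearMap.trace_comp_comm']
    congr 1
    apply LinearMap.ext; intro v
    apply Subtype.ext
    simp only [LinearMap.comp_apply, pr, LinearMap.codRestrict_apply,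
      Submodule.coe_subtype, LinearMap.restrict_coe_apply]
    exact (hPv_fix _ (hpres v v.2)).symm
  have expand : ricciVertMap n C₁ C₂ ∘ₗ Pv = (2⁻¹ : ℝ) •
      (LRmap (C₂ * C₁) (1 : Matrix (Fin n ⊕ Fin n) (Fin n ⊕ Fin n) ℝ)
        + LRmap (1 : Matrix (Fin n ⊕ Fin n) (Fin n ⊕ Fin n) ℝ) (C₁ * C₂)
        - LRmap C₁ C₂ - LRmap C₂ C₁
        + (LRmap (C₂ * C₁ * Jmat n) (Jmat n) + LRmap (Jmat n) (Jmat n * (C₁ * C₂))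
            - LRmap (C₁ * Jmat n) (Jmat n * C₂) - LRmap (C₂ * Jmat n) (Jmat n * C₁))) := by
    apply LinearMap.ext; intro C
    rw [LinearMap.comp_apply, hPv_apply, LinearMap.map_smul, LinearMap.smul_apply]
    congr 1
    simp only [LinearMap.add_apply, LinearMap.sub_apply, LRmap_apply, ricciVertMap_apply,
      map_add]
    noncomm_ring
  have trace_fPv : LinearMap.trace ℝ _ (ricciVertMap n C₁ C₂ ∘ₗ Pv)
      = 2 * (n : ℝ) * Matrix.trace (C₂ * C₁) := by
    have tr1 : Matrix.trace (1 : Matrix (Fin n ⊕ Fin n) (Fin n ⊕ Fin n) ℝ)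
        = (n : ℝ) + n := by
      rw [Matrix.trace_one]
      push_cast [Fintype.card_sum, Fintype.card_fin]
      ring
    have tJ : Matrix.trace (Jmat n) = 0 := trace_J_zero n
    have tC₁ : Matrix.trace C₁ = 0 := trace_anti_zero hJ2 hC₁
    have tC₂ : Matrix.trace C₂ = 0 := trace_anti_zero hJ2 hC₂
    have tC₁J : Matrix.trace (C₁ * Jmat n) = 0 := trace_mul_J_zero hC₁
    have tC₂J : Matrix.trace (C₂ * Jmat n) = 0 := trace_mul_J_zero hC₂
    have tcomm : Matrix.trace (C₁ * C₂) = Matrix.trace (C₂ * C₁) :=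
      Matrix.trace_mul_comm C₁ C₂
    rw [expand, _root_.map_smul]
    simp only [map_add, map_sub]
    simp only [trace_LRmap]
    rw [tr1, tJ, tC₁, tC₂, tC₁J, tC₂J, tcomm]
    rw [smul_eq_mul]
    ring
  have trace_pair : LinearMap.trace ℝ
      (Matrix (Fin k) (Fin n ⊕ Fin n) ℝ × Matrix (Fin n ⊕ Fin n) (Fin k) ℝ)
      (LinearMap.prodMap (rmulMap (C₁ * C₂)) (lmulMap (C₂ * C₁)))
      = 2 * (k : ℝ) * Matrix.trace (C₂ * C₁) := by
    rw [LinearMap.trace_prodMap']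
    have e1 : (rmulMap (C₁ * C₂) : Matrix (Fin k) (Fin n ⊕ Fin n) ℝ →ₗ[ℝ] _)
        = LRmap (1 : Matrix (Fin k) (Fin k) ℝ) (C₁ * C₂) := by
      apply LinearMap.ext; intro C
      simp [rmulMap, LRmap]
    have e2 : (lmulMap (C₂ * C₁) : Matrix (Fin n ⊕ Fin n) (Fin k) ℝ →ₗ[ℝ] _)
        = LRmap (C₂ * C₁) (1 : Matrix (Fin k) (Fin k) ℝ) := by
      apply LinearMap.ext; intro C
      simp [lmulMap, LRmap]
    rw [e1, e2, trace_LRmap, trace_LRmap]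
    rw [Matrix.trace_one, Matrix.trace_mul_comm C₁ C₂]
    push_cast [Fintype.card_fin]
    ring
  rw [key, trace_fPv, trace_pair]
  ring
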